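/- arXiv:2309.04838 — 2 statements merged into one kernel-verified Lean document; each statement's English description precedes it below -/
import Mathlib

section
/- Let 𝒢_{n,bad} be the set of tuples (v_g)_{g ∈ G_n − {1}} of positive squarefree integers indexed by the non-identity elements of G_n such that: the v_g are pairwise coprime; if a prime p divides v_g for some g with π₀(q_n(g)) = 0 then p ≡ 1 (mod ord(g)); and the product of v_g over all g with π₀(q_n(g)) ≠ 0 equals 3. Let f_n : ℕ → ℕ be the multiplicative function supported on squarefree integers with f_n(p) = w_n(p) on primes, where w_n(p) := 9^n − 1 if p ≡ 4 or 7 (mod 9), w_n(p) := 27^n − 1 if p ≡ 1 (mod 9), and w_n(p) := 0 otherwise (so f_n(m) = ∏_{p ∣ m} w_n(p) for squarefree m, f_n(m) = 0 otherwise, f_n(1) = 1). Then for every real X ≥ 1, the number of tuples in 𝒢_{n,bad} whose total product ∏_{g ∈ G_n − {1}} v_g is at most X equals 2 * 27^n * Σ_{m ≤ X/3} f_n(m). -/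
/-- The abelian group `A_n = ℤ/3 ⊕ (ℤ/9)^n`. -/
abbrev An (n : ℕ) : Type := ZMod 3 × (Fin n → ZMod 9)

/-- Projection onto the `ℤ/3` factor. -/
def pi0 {n : ℕ} (a : An n) : ZMod 3 := a.1

/-- The reduction map `ℤ/9 → ℤ/3`. -/
def red : ZMod 9 →+* ZMod 3 := ZMod.castHom (show 3 ∣ 9 by norm_num) (ZMod 3)

/-- The `i`-th `ℤ/9` coordinate reduced mod 3. -/
def pii {n : ℕ} (i : Fin n) (a : An n) : ZMod 3 := red (a.2 i)

/-- The 2-cocycle `θ(σ,τ) i = π₀(σ)·π_i(τ)`. -/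
def theta {n : ℕ} (σ τ : An n) : Fin n → ZMod 3 := fun i => pi0 σ * pii i τ

/-- The underlying set of the group `G_n`. -/
def Gn (n : ℕ) : Type := (Fin n → ZMod 3) × An n

namespace Gn

variable {n : ℕ}

instance instFintype : Fintype (Gn n) :=
  inferInstanceAs (Fintype ((Fin n → ZMod 3) × An n))

instance instDecEq : DecidableEq (Gn n) :=
  inferInstanceAs (DecidableEq ((Fin n → ZMod 3) × An n))

lemma theta_add_left (a b c : An n) : theta (a + b) c = theta a c + theta b c := by
  funext i; simp only [theta, pi0, Pi.add_apply, Prod.fst_add]; ring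

lemma theta_add_right (a b c : An n) : theta a (b + c) = theta a b + theta a c := by
  funext i
  simp only [theta, pii, pi0, Pi.add_apply, Prod.snd_add, map_add]
  ring

lemma theta_zero_left (a : An n) : theta 0 a = 0 := by
  funext i; simp [theta, pi0]

lemma theta_zero_right (a : An n) : theta a 0 = 0 := by
  funext i; simp [theta, pii]

lemma theta_neg_left (a b : An n) : theta (-a) b = - theta a b := by
  funext i; simp only [theta, pi0, Prod.fst_neg, Pi.neg_apply]; ring

/-- The group structure on `G_n` given by the cocycle `θ`. -/
instance instGroup : Group (Gn n) where
  mul x y := (x.1 + y.1 + theta x.2 y.2, x.2 + y.2)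
  one := (0, 0)
  inv x := (-x.1 + theta x.2 x.2, -x.2)
  mul_assoc x y z := by
    apply Prod.ext
    · show x.1 + y.1 + theta x.2 y.2 + z.1 + theta (x.2 + y.2) z.2
        = x.1 + (y.1 + z.1 + theta y.2 z.2) + theta x.2 (y.2 + z.2)
      rw [theta_add_left, theta_add_right]; abel
    · exact add_assoc _ _ _
  one_mul x := by
    apply Prod.ext
    · show 0 + x.1 + theta 0 x.2 = x.1
      rw [theta_zero_left]; abel
    · exact zero_add _
  mul_one x := by
    apply Prod.ext
    · show x.1 + 0 + theta x.2 0 = x.1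
      rw [theta_zero_right]; abel
    · exact add_zero _
  inv_mul_cancel x := by
    apply Prod.ext
    · show -x.1 + theta x.2 x.2 + x.1 + theta (-x.2) x.2 = 0
      rw [theta_neg_left]; abel
    · exact neg_add_cancel _

/-- The quotient map `q_n : G_n → A_n`, `(c, a) ↦ a`. -/
def qn (x : Gn n) : An n := x.2

lemma qn_mul (x y : Gn n) : qn (x * y) = qn x + qn y := rfl

/-- `q_n` as a group homomorphism to (the multiplicative version of) `A_n`. -/
def qnHom : Gn n →* Multiplicative (An n) where
  toFun x := Multiplicative.ofAdd (qn x)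
  map_one' := rfl
  map_mul' _ _ := rfl

end Gn

/-- The weight `w_n(p)`: `9^n − 1` if `p ≡ 4, 7 (mod 9)`, `27^n − 1` if
`p ≡ 1 (mod 9)`, and `0` otherwise. -/
def wn (n p : ℕ) : ℕ :=
  if p % 9 = 4 ∨ p % 9 = 7 then 9 ^ n - 1
  else if p % 9 = 1 then 27 ^ n - 1
  else 0

/-- The multiplicative function `f_n`, supported on squarefree integers, with
`f_n(p) = w_n(p)` on primes: `f_n(m) = ∏_{p ∣ m} w_n(p)` for squarefree `m` and
`f_n(m) = 0` otherwise (so `f_n(1) = 1`). -/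
def fn (n m : ℕ) : ℕ :=
  if Squarefree m then ∏ p ∈ m.primeFactors, wn n p else 0

/-- The number of tuples in `𝒢_{n,bad}` (Definition 3.1 of the paper) with total
product at most `X`: tuples `(v_g)_{g ∈ G_n − {1}}` of positive squarefree pairwise
coprime integers such that `p ∣ v_g` with `π₀(q_n(g)) = 0` implies
`p ≡ 1 (mod ord g)`, and `∏_{π₀(q_n(g)) ≠ 0} v_g = 3`. -/
noncomputable def badCount (n : ℕ) (X : ℝ) : ℕ :=
  Nat.card {v : {g : Gn n // g ≠ 1} → ℕ //
    (∀ g, 0 < v g ∧ Squarefree (v g)) ∧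
    (∀ g h : {g : Gn n // g ≠ 1}, g ≠ h → Nat.Coprime (v g) (v h)) ∧
    (∀ g : {g : Gn n // g ≠ 1}, pi0 (Gn.qn g.1) = 0 →
      ∀ p, p.Prime → p ∣ v g → p ≡ 1 [MOD orderOf g.1]) ∧
    (∏ g ∈ Finset.univ.filter
        (fun g : {g : Gn n // g ≠ 1} => pi0 (Gn.qn g.1) ≠ 0), v g) = 3 ∧
    ((∏ g, v g : ℕ) : ℝ) ≤ X}

namespace Gn
variable {n : ℕ}

lemma mul_def (x y : Gn n) : x * y = (x.1 + y.1 + theta x.2 y.2, x.2 + y.2) := rfl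

lemma one_def : (1 : Gn n) = (0, 0) := rfl

lemma theta_eq_zero_left {a : An n} (h : a.1 = 0) (b : An n) : theta a b = 0 := by
  funext i; simp [theta, pi0, h]

lemma pow_eq (x : Gn n) (hx : x.2.1 = 0) (k : ℕ) : x ^ k = (k • x.1, k • x.2) := by
  induction k with
  | zero => simp [one_def]; rfl
  | succ k ih =>
    rw [pow_succ, mul_def, ih]
    have h1 : (k • x.2).1 = 0 := by
      rw [Prod.smul_fst, hx, smul_zero]
    rw [theta_eq_zero_left h1]
    refine Prod.ext ?_ ?_
    · show k • x.1 + x.1 + 0 = (k + 1) • x.1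
      rw [add_zero, succ_nsmul]
    · show k • x.2 + x.2 = (k + 1) • x.2
      rw [succ_nsmul]

lemma smul9_zmod3 : ∀ z : ZMod 3, (9 : ℕ) • z = 0 := by decide
lemma smul9_zmod9 : ∀ z : ZMod 9, (9 : ℕ) • z = 0 := by decide
lemma smul3_zmod3 : ∀ z : ZMod 3, (3 : ℕ) • z = 0 := by decide

lemma pow_nine (x : Gn n) (hx : x.2.1 = 0) : x ^ 9 = 1 := by
  rw [pow_eq x hx, one_def]
  refine Prod.ext (funext fun i => ?_) (Prod.ext ?_ (funext fun i => ?_))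
  · exact smul9_zmod3 _
  · exact (show (9:ℕ) • x.2.1 = 0 from by rw [hx, smul_zero])
  · exact smul9_zmod9 _

lemma orderOf_dvd_nine (x : Gn n) (hx : x.2.1 = 0) : orderOf x ∣ 9 :=
  orderOf_dvd_of_pow_eq_one (pow_nine x hx)

lemma pow_three_eq_one_iff (x : Gn n) (hx : x.2.1 = 0) :
    x ^ 3 = 1 ↔ ∀ i, (3 : ℕ) • x.2.2 i = 0 := by
  rw [pow_eq x hx, one_def]
  erw [Prod.ext_iff, Prod.ext_iff]
  constructor
  · intro h i
    have := congrFun h.2.2 i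
    simpa using this
  · intro h
    refine ⟨funext fun i => smul3_zmod3 _, ?_, funext h⟩
    · show (3:ℕ) • x.2.1 = 0
      rw [hx, smul_zero]

end Gn
lemma card_ne_and {α : Type*} [Fintype α] [DecidableEq α] (a : α) (q : α → Prop)
    [DecidablePred q] (ha : q a) :
    Nat.card {x : α // x ≠ a ∧ q x} = Nat.card {x : α // q x} - 1 := by
  rw [Nat.card_eq_fintype_card, Nat.card_eq_fintype_card, Fintype.card_subtype,
    Fintype.card_subtype]
  have h : Finset.univ.filter (fun x => x ≠ a ∧ q x) = (Finset.univ.filter q).erase a := by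
    ext x; simp [and_comm]
  rw [h, Finset.card_erase_of_mem (by simp [ha])]

namespace Gn
variable {n : ℕ}

def subZeroEquiv : {x : Gn n // x.2.1 = 0} ≃ (Fin n → ZMod 3) × (Fin n → ZMod 9) where
  toFun x := (x.1.1, x.1.2.2)
  invFun y := ⟨(y.1, (0, y.2)), rfl⟩
  left_inv := by rintro ⟨⟨c, a, b⟩, h⟩; dsimp at h; subst h; rfl
  right_inv := by intro y; rfl

lemma card_zero : Nat.card {x : Gn n // x.2.1 = 0} = 27 ^ n := by
  rw [Nat.card_congr subZeroEquiv, Nat.card_eq_fintype_card]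
  simp only [Fintype.card_prod, Fintype.card_fun, ZMod.card, Fintype.card_fin]
  rw [← mul_pow]; norm_num

def subTorsEquiv :
    {x : Gn n // x.2.1 = 0 ∧ ∀ i, (3:ℕ) • x.2.2 i = 0} ≃
      (Fin n → ZMod 3) × (Fin n → {z : ZMod 9 // (3:ℕ) • z = 0}) where
  toFun x := (x.1.1, fun i => ⟨x.1.2.2 i, x.2.2 i⟩)
  invFun y := ⟨(y.1, (0, fun i => (y.2 i).1)), rfl, fun i => (y.2 i).2⟩
  left_inv := by rintro ⟨⟨c, a, b⟩, h1, h2⟩; dsimp at h1; subst h1; rfl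
  right_inv := by intro y; rfl

lemma card_zmod9_tors : Fintype.card {z : ZMod 9 // (3:ℕ) • z = 0} = 3 := by decide

lemma card_tors : Nat.card {x : Gn n // x.2.1 = 0 ∧ ∀ i, (3:ℕ) • x.2.2 i = 0} = 9 ^ n := by
  rw [Nat.card_congr subTorsEquiv, Nat.card_eq_fintype_card]
  simp only [Fintype.card_prod, Fintype.card_fun, ZMod.card, Fintype.card_fin, card_zmod9_tors]
  rw [← mul_pow]; norm_num

def subNeEquiv : {x : Gn n // x.2.1 ≠ 0} ≃
    (Fin n → ZMod 3) × ({z : ZMod 3 // z ≠ 0} × (Fin n → ZMod 9)) where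
  toFun x := (x.1.1, ⟨x.1.2.1, x.2⟩, x.1.2.2)
  invFun y := ⟨(y.1, (y.2.1.1, y.2.2)), y.2.1.2⟩
  left_inv := by rintro ⟨⟨c, a, b⟩, h⟩; rfl
  right_inv := by intro y; rfl

lemma card_ne_zero : Nat.card {x : Gn n // x.2.1 ≠ 0} = 2 * 27 ^ n := by
  rw [Nat.card_congr subNeEquiv, Nat.card_eq_fintype_card]
  have h2 : Fintype.card {z : ZMod 3 // z ≠ 0} = 2 := by decide
  simp only [Fintype.card_prod, Fintype.card_fun, ZMod.card, Fintype.card_fin, h2]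
  rw [show (27:ℕ) = 3 * 9 by norm_num, mul_pow]; ring

end Gn
namespace Gn
variable {n : ℕ}

lemma orderOf_eq_three_or_nine (x : Gn n) (hne : x ≠ 1) (hx : x.2.1 = 0) :
    orderOf x = 3 ∨ orderOf x = 9 := by
  have hd : orderOf x ∣ 9 := orderOf_dvd_nine x hx
  have h1 : orderOf x ≠ 1 := by simpa [orderOf_eq_one_iff] using hne
  have hmem : orderOf x ∈ Nat.divisors 9 := Nat.mem_divisors.mpr ⟨hd, by norm_num⟩
  have hdiv : Nat.divisors 9 = {1, 3, 9} := by decide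
  rw [hdiv] at hmem
  simp only [Finset.mem_insert, Finset.mem_singleton] at hmem
  tauto

lemma one_snd_fst : ((1 : Gn n).2.1 : ZMod 3) = 0 := rfl

lemma card_eligible_flat (p : ℕ) :
    Nat.card {x : Gn n // x ≠ 1 ∧ x.2.1 = 0 ∧ p ≡ 1 [MOD orderOf x]} = wn n p := by
  unfold wn
  by_cases h47 : p % 9 = 4 ∨ p % 9 = 7
  · rw [if_pos h47]
    have e : ∀ x : Gn n, (x ≠ 1 ∧ x.2.1 = 0 ∧ p ≡ 1 [MOD orderOf x]) ↔
        (x ≠ 1 ∧ (x.2.1 = 0 ∧ ∀ i, (3:ℕ) • x.2.2 i = 0)) := by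
      intro x
      constructor
      · rintro ⟨hne, hx, hmod⟩
        refine ⟨hne, hx, ?_⟩
        rcases orderOf_eq_three_or_nine x hne hx with h3 | h9
        · rw [← pow_three_eq_one_iff x hx, ← h3]
          exact pow_orderOf_eq_one x
        · rw [h9] at hmod
          have : p % 9 = 1 % 9 := hmod
          omega
      · rintro ⟨hne, hx, htor⟩
        refine ⟨hne, hx, ?_⟩
        have h3 : x ^ 3 = 1 := (pow_three_eq_one_iff x hx).mpr htor
        have hd : orderOf x ∣ 3 := orderOf_dvd_of_pow_eq_one h3
        have h1 : orderOf x ≠ 1 := by simpa [orderOf_eq_one_iff] using hne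
        have ho : orderOf x = 3 := by
          rcases (Nat.prime_three).eq_one_or_self_of_dvd _ hd with h | h <;> omega
        rw [ho]
        show p % 3 = 1 % 3
        omega
    rw [Nat.card_congr (Equiv.subtypeEquivRight e),
      card_ne_and 1 (fun x : Gn n => x.2.1 = 0 ∧ ∀ i, (3:ℕ) • x.2.2 i = 0)
        ⟨rfl, fun i => smul_zero 3⟩, card_tors]
  · by_cases h1 : p % 9 = 1
    · rw [if_neg h47, if_pos h1]
      have e : ∀ x : Gn n, (x ≠ 1 ∧ x.2.1 = 0 ∧ p ≡ 1 [MOD orderOf x]) ↔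
          (x ≠ 1 ∧ x.2.1 = 0) := by
        intro x
        constructor
        · rintro ⟨hne, hx, _⟩; exact ⟨hne, hx⟩
        · rintro ⟨hne, hx⟩
          refine ⟨hne, hx, ?_⟩
          have h9 : p ≡ 1 [MOD 9] := by show p % 9 = 1 % 9; omega
          exact h9.of_dvd (orderOf_dvd_nine x hx)
      rw [Nat.card_congr (Equiv.subtypeEquivRight e),
        card_ne_and 1 (fun x : Gn n => x.2.1 = 0) rfl, card_zero]
    · rw [if_neg h47, if_neg h1]
      have : IsEmpty {x : Gn n // x ≠ 1 ∧ x.2.1 = 0 ∧ p ≡ 1 [MOD orderOf x]} := by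
        refine ⟨fun y => ?_⟩
        obtain ⟨x, hne, hx, hmod⟩ := y
        rcases orderOf_eq_three_or_nine x hne hx with h3 | h9
        · rw [h3] at hmod
          have : p % 3 = 1 % 3 := hmod
          omega
        · rw [h9] at hmod
          have : p % 9 = 1 % 9 := hmod
          omega
      exact Nat.card_of_isEmpty

end Gn
section Counting

open Finset

variable {ι : Type*} [Fintype ι] (Q : ι → ℕ → Prop)

/-- The conditions on a tuple of positive squarefree pairwise coprime integers whose
prime divisors at index `i` satisfy `Q i`. -/
def condsP (u : ι → ℕ) : Prop :=
  (∀ i, 0 < u i ∧ Squarefree (u i)) ∧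
  (∀ i j, i ≠ j → Nat.Coprime (u i) (u j)) ∧
  (∀ i p, p.Prime → p ∣ u i → Q i p)

lemma squarefree_prod_of_conds (u : ι → ℕ) (h1 : ∀ i, Squarefree (u i))
    (h2 : ∀ i j, i ≠ j → Nat.Coprime (u i) (u j)) : Squarefree (∏ i, u i) := by
  classical
  suffices H : ∀ s : Finset ι, Squarefree (∏ i ∈ s, u i) from H _
  intro s
  induction s using Finset.cons_induction with
  | empty => simpa using squarefree_one
  | cons a s ha ih =>
    rw [Finset.prod_cons]
    have hcop : Nat.Coprime (u a) (∏ i ∈ s, u i) :=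
      Nat.Coprime.prod_right (fun j hj => h2 a j (by rintro rfl; exact ha hj))
    exact (Nat.squarefree_mul hcop).mpr ⟨h1 a, ih⟩

theorem card_factorizations (m : ℕ) :
    Nat.card {u : ι → ℕ // condsP Q u ∧ ∏ i, u i = m} =
      if Squarefree m then ∏ p ∈ m.primeFactors, Nat.card {i // Q i p} else 0 := by
  classical
  by_cases hm : Squarefree m
  swap
  · rw [if_neg hm]
    have : IsEmpty {u : ι → ℕ // condsP Q u ∧ ∏ i, u i = m} := by
      refine ⟨fun y => ?_⟩
      obtain ⟨u, ⟨hps, hcop, _⟩, hprod⟩ := y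
      exact hm (hprod ▸ squarefree_prod_of_conds u (fun i => (hps i).2) hcop)
    exact Nat.card_of_isEmpty
  rw [if_pos hm]
  -- the tuple associated to an assignment of primes to indices
  set D : (∀ _p : m.primeFactors, ι) → ι → ℕ :=
    fun ψ i => ∏ p ∈ m.primeFactors.attach.filter (fun p => ψ p = i), (p : ℕ) with hD
  have hattach : ∏ p ∈ m.primeFactors.attach, (p : ℕ) = m := by
    rw [Finset.prod_attach m.primeFactors (fun x => x)]
    exact Nat.prod_primeFactors_of_squarefree hm
  have hdvd : ∀ ψ i, D ψ i ∣ m := by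
    intro ψ i
    rw [← hattach]
    exact Finset.prod_dvd_prod_of_subset _ _ _ (Finset.filter_subset _ _)
  have hkey : ∀ ψ i p, p.Prime → p ∣ D ψ i →
      ∃ hp : p ∈ m.primeFactors, ψ ⟨p, hp⟩ = i := by
    intro ψ i p hp hpd
    rw [hD] at hpd
    obtain ⟨q, hq, hpq⟩ := (Prime.dvd_finset_prod_iff hp.prime _).mp hpd
    have hq1 : (q : ℕ).Prime := Nat.prime_of_mem_primeFactors q.2
    have hpq' : p = (q : ℕ) := (Nat.prime_dvd_prime_iff_eq hp hq1).mp hpq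
    subst hpq'
    exact ⟨q.2, (Finset.mem_filter.mp hq).2⟩
  set F : (∀ _p : m.primeFactors, {i // Q i _p.1}) →
      {u : ι → ℕ // condsP Q u ∧ ∏ i, u i = m} := fun ψ =>
    ⟨D (fun p => (ψ p).1), by
      constructor
      · refine ⟨fun i => ⟨?_, hm.squarefree_of_dvd (hdvd _ i)⟩, ?_, ?_⟩
        · exact Nat.pos_of_dvd_of_pos (hdvd _ i) (Nat.pos_of_ne_zero hm.ne_zero)
        · intro i j hij
          by_contra hnc
          obtain ⟨p, hp, hpi, hpj⟩ := Nat.Prime.not_coprime_iff_dvd.mp hnc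
          obtain ⟨hp1, e1⟩ := hkey _ i p hp hpi
          obtain ⟨hp2, e2⟩ := hkey _ j p hp hpj
          exact hij (e1.symm.trans e2)
        · intro i p hp hpd
          obtain ⟨hp1, e1⟩ := hkey _ i p hp hpd
          exact e1 ▸ (ψ ⟨p, hp1⟩).2
      · rw [hD]
        dsimp only
        conv_rhs => rw [← hattach]
        exact Finset.prod_fiberwise_of_maps_to (s := m.primeFactors.attach)
          (t := Finset.univ) (g := fun p => ((ψ p).1 : ι)) (fun x _ => Finset.mem_univ _)
          (fun p : m.primeFactors => (p : ℕ))⟩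
  have hFbij : Function.Bijective F := by
    constructor
    · intro ψ ψ' h
      have hval : D (fun p => (ψ p).1) = D (fun p => (ψ' p).1) := congrArg Subtype.val h
      funext p
      have hmem : p ∈ m.primeFactors.attach.filter
          (fun q => (ψ q).1 = (ψ p).1) := Finset.mem_filter.mpr ⟨Finset.mem_attach _ _, rfl⟩
      have hpd : (p : ℕ) ∣ D (fun q => (ψ q).1) ((ψ p).1) :=
        Finset.dvd_prod_of_mem _ hmem
      rw [hval] at hpd
      obtain ⟨hp1, e1⟩ := hkey _ _ (p : ℕ) (Nat.prime_of_mem_primeFactors p.2) hpd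
      exact Subtype.ext ((show (ψ' p).1 = (ψ p).1 from e1)).symm
    · rintro ⟨u, ⟨hps, hcop, hQ⟩, hprod⟩
      have hexu : ∀ p, p ∈ m.primeFactors → ∃! i, p ∣ u i := by
        intro p hp
        have hpp : p.Prime := Nat.prime_of_mem_primeFactors hp
        have hpm : p ∣ ∏ i, u i := hprod ▸ Nat.dvd_of_mem_primeFactors hp
        obtain ⟨i, _, hi⟩ := (Prime.dvd_finset_prod_iff hpp.prime _).mp hpm
        refine ⟨i, hi, fun j hj => ?_⟩
        by_contra hij
        exact Nat.Prime.not_coprime_iff_dvd.mpr ⟨p, hpp, hj, hi⟩ (hcop j i hij)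
      choose φ hφ1 hφ2 using fun (p : m.primeFactors) => hexu p.1 p.2
      refine ⟨fun p => ⟨φ p, hQ (φ p) p.1 (Nat.prime_of_mem_primeFactors p.2) (hφ1 p)⟩, ?_⟩
      apply Subtype.ext
      funext i
      show D φ i = u i
      have hui : u i ∣ m := hprod ▸ Finset.dvd_prod_of_mem u (Finset.mem_univ i)
      have hfilter : m.primeFactors.attach.filter (fun p => φ p = i) =
          m.primeFactors.attach.filter (fun p => p.1 ∣ u i) := by
        ext q
        simp only [Finset.mem_filter, Finset.mem_attach, true_and]
        constructor
        · rintro rfl; exact hφ1 q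
        · intro h; exact (hφ2 q i h).symm
      rw [hD]
      dsimp only
      rw [hfilter]
      calc ∏ p ∈ m.primeFactors.attach.filter (fun p => p.1 ∣ u i), (p : ℕ)
          = ∏ p ∈ m.primeFactors.attach, if (p : ℕ) ∣ u i then (p : ℕ) else 1 :=
            Finset.prod_filter _ _
        _ = ∏ p ∈ m.primeFactors, if p ∣ u i then p else 1 :=
            Finset.prod_attach m.primeFactors (fun p => if p ∣ u i then p else 1)
        _ = ∏ p ∈ m.primeFactors.filter (· ∣ u i), p := (Finset.prod_filter _ _).symm
        _ = ∏ p ∈ (u i).primeFactors, p := by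
            rw [Nat.primeFactors_filter_dvd_of_dvd hm.ne_zero hui]
        _ = u i := Nat.prod_primeFactors_of_squarefree (hm.squarefree_of_dvd hui)
  rw [Nat.card_congr (Equiv.ofBijective F hFbij).symm, Nat.card_pi,
    ← Finset.prod_coe_sort m.primeFactors (fun p => Nat.card {i // Q i p})]

end Counting
lemma Nat.card_sigma' {α : Type*} [Fintype α] (β : α → Type*) [h : ∀ a, Finite (β a)] :
    Nat.card (Σ a, β a) = ∑ a, Nat.card (β a) := by
  classical
  letI : ∀ a, Fintype (β a) := fun a => Fintype.ofFinite (β a)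
  simp [Nat.card_eq_fintype_card, Fintype.card_sigma]

section FiniteFact

variable {ι : Type*} [Fintype ι] (Q : ι → ℕ → Prop)

lemma finite_factorizations (m : ℕ) :
    Finite {u : ι → ℕ // condsP Q u ∧ ∏ i, u i = m} := by
  classical
  have hb : ∀ (u : {u : ι → ℕ // condsP Q u ∧ ∏ i, u i = m}) (i : ι), u.1 i < m + 2 := by
    intro u i
    have hd : u.1 i ∣ m := by
      have h0 : u.1 i ∣ ∏ i, u.1 i := Finset.dvd_prod_of_mem u.1 (Finset.mem_univ i)
      rwa [u.2.2] at h0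
    rcases Nat.eq_zero_or_pos m with rfl | hm
    · exfalso
      have hp : 0 < ∏ i, u.1 i := Finset.prod_pos (fun i _ => (u.2.1.1 i).1)
      rw [u.2.2] at hp
      omega
    · exact lt_of_le_of_lt (Nat.le_of_dvd hm hd) (by omega)
  refine Finite.of_injective
    (fun u => (fun i => (⟨u.1 i, hb u i⟩ : Fin (m + 2)))) ?_
  intro u v h
  apply Subtype.ext; funext i
  have := congrFun h i
  simpa [Fin.ext_iff] using this

/-- Generic equiv splitting off the value of `f`. -/
def prodSigmaEquiv {α : Type*} (C : α → Prop) (f : α → ℕ) (M : ℕ)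
    (hpos : ∀ a, C a → 1 ≤ f a) :
    {a : α // C a ∧ f a ≤ M} ≃ Σ m : (Finset.Icc 1 M), {a : α // C a ∧ f a = m.1} where
  toFun a := ⟨⟨f a.1, Finset.mem_Icc.mpr ⟨hpos a.1 a.2.1, a.2.2⟩⟩, ⟨a.1, a.2.1, rfl⟩⟩
  invFun x := ⟨x.2.1, x.2.2.1, le_of_eq_of_le x.2.2.2 (Finset.mem_Icc.mp x.1.2).2⟩
  left_inv a := rfl
  right_inv := by
    rintro ⟨⟨m, hm⟩, ⟨a, hC, hfa⟩⟩
    dsimp only at hfa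
    subst hfa
    rfl

end FiniteFact

namespace Gn
variable {n : ℕ}

abbrev Idx (n : ℕ) := {g : Gn n // g ≠ 1}
abbrev Idx0 (n : ℕ) := {g : Idx n // pi0 (Gn.qn g.1) = 0}
abbrev IdxB (n : ℕ) := {g : Idx n // pi0 (Gn.qn g.1) ≠ 0}

/-- The congruence condition for the indices with `π₀ ∘ q = 0`. -/
def Qmod (g : Idx0 n) (p : ℕ) : Prop := p ≡ 1 [MOD orderOf g.1.1]

lemma card_IdxB : Nat.card (IdxB n) = 2 * 27 ^ n := by
  rw [Nat.card_congr (Equiv.subtypeSubtypeEquivSubtypeInter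
    (fun g : Gn n => g ≠ 1) (fun g => pi0 (Gn.qn g) ≠ 0))]
  have e : ∀ x : Gn n, (x ≠ 1 ∧ pi0 (Gn.qn x) ≠ 0) ↔ x.2.1 ≠ 0 := by
    intro x
    constructor
    · exact fun h => h.2
    · exact fun h => ⟨fun he => h (by rw [he]; rfl), h⟩
  rw [Nat.card_congr (Equiv.subtypeEquivRight e), card_ne_zero]

/-- Flattening equiv for the eligible sets. -/
def QmodFlatEquiv (p : ℕ) :
    {g : Idx0 n // Qmod g p} ≃
      {x : Gn n // x ≠ 1 ∧ x.2.1 = 0 ∧ p ≡ 1 [MOD orderOf x]} where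
  toFun g := ⟨g.1.1.1, g.1.1.2, g.1.2, g.2⟩
  invFun x := ⟨⟨⟨x.1, x.2.1⟩, x.2.2.1⟩, x.2.2.2⟩
  left_inv g := rfl
  right_inv x := rfl

lemma card_Qmod (p : ℕ) : Nat.card {g : Idx0 n // Qmod g p} = wn n p := by
  rw [Nat.card_congr (QmodFlatEquiv p), card_eligible_flat p]

lemma card_factorizations_Qmod (m : ℕ) :
    Nat.card {u : Idx0 n → ℕ // condsP Qmod u ∧ ∏ g, u g = m} = fn n m := by
  rw [card_factorizations Qmod m, fn]
  split_ifs with h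
  · exact Finset.prod_congr rfl (fun p _ => card_Qmod p)
  · rfl

end Gn
namespace Gn
variable {n : ℕ}

open Finset

/-- The tuple built from a distinguished index `g₀` (getting value 3) and values on
the `π₀∘q = 0` part. -/
def vfun (g₀ : IdxB n) (u : Idx0 n → ℕ) : Idx n → ℕ :=
  fun g => if h : pi0 (Gn.qn g.1) = 0 then u ⟨g, h⟩ else if g = g₀.1 then 3 else 1

lemma vfun_idx0 (g₀ : IdxB n) (u : Idx0 n → ℕ) (g' : Idx0 n) : vfun g₀ u g'.1 = u g' := by
  simp only [vfun]
  rw [dif_pos g'.2]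

lemma vfun_ne (g₀ : IdxB n) (u : Idx0 n → ℕ) (g : Idx n) (h : ¬ pi0 (Gn.qn g.1) = 0) :
    vfun g₀ u g = if g = g₀.1 then 3 else 1 := by
  simp only [vfun]
  rw [dif_neg h]

lemma exists_three (v : Idx n → ℕ)
    (hcop : ∀ g h : Idx n, g ≠ h → Nat.Coprime (v g) (v h))
    (hprod : ∏ g ∈ Finset.univ.filter (fun g : Idx n => pi0 (Gn.qn g.1) ≠ 0), v g = 3) :
    ∃ g₀ : Idx n, pi0 (Gn.qn g₀.1) ≠ 0 ∧ v g₀ = 3 ∧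
      ∀ h : Idx n, pi0 (Gn.qn h.1) ≠ 0 → h ≠ g₀ → v h = 1 := by
  set F := Finset.univ.filter (fun g : Idx n => pi0 (Gn.qn g.1) ≠ 0) with hF
  have hdvd : ∀ g ∈ F, v g ∣ 3 := fun g hg => hprod ▸ Finset.dvd_prod_of_mem v hg
  have hex : ∃ g ∈ F, v g ≠ 1 := by
    by_contra hc
    push_neg at hc
    have h1 := Finset.prod_eq_one hc
    rw [hprod] at h1
    omega
  obtain ⟨g₀, hg₀F, hg₀⟩ := hex
  have h3 : v g₀ = 3 := by
    rcases Nat.Prime.eq_one_or_self_of_dvd Nat.prime_three _ (hdvd g₀ hg₀F) with h | h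
    · exact absurd h hg₀
    · exact h
  refine ⟨g₀, (Finset.mem_filter.mp hg₀F).2, h3, fun h hh hne => ?_⟩
  have hhF : h ∈ F := Finset.mem_filter.mpr ⟨Finset.mem_univ _, hh⟩
  rcases Nat.Prime.eq_one_or_self_of_dvd Nat.prime_three _ (hdvd h hhF) with h1 | h3'
  · exact h1
  · exfalso
    have hc := hcop h g₀ hne
    rw [h3', h3] at hc
    exact absurd hc (by decide)

lemma not_three_dvd_of_conds (u : Idx0 n → ℕ)
    (hQ : ∀ g p, p.Prime → p ∣ u g → Qmod g p) (g : Idx0 n) : ¬ (3 ∣ u g) := by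
  intro hdvd
  have h := hQ g 3 Nat.prime_three hdvd
  unfold Qmod at h
  have hx : g.1.1.2.1 = 0 := g.2
  rcases orderOf_eq_three_or_nine g.1.1 g.1.2 hx with h3 | h9
  · rw [h3] at h
    have : 3 % 3 = 1 % 3 := h
    omega
  · rw [h9] at h
    have : 3 % 9 = 1 % 9 := h
    omega

lemma vfun_prodF (g₀ : IdxB n) (u : Idx0 n → ℕ) :
    ∏ g ∈ Finset.univ.filter (fun g : Idx n => pi0 (Gn.qn g.1) ≠ 0), vfun g₀ u g = 3 := by
  have hmem : g₀.1 ∈ Finset.univ.filter (fun g : Idx n => pi0 (Gn.qn g.1) ≠ 0) :=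
    Finset.mem_filter.mpr ⟨Finset.mem_univ _, g₀.2⟩
  rw [Finset.prod_eq_single_of_mem g₀.1 hmem (fun b hb hne => by
    rw [vfun_ne _ _ _ (Finset.mem_filter.mp hb).2, if_neg hne])]
  rw [vfun_ne _ _ _ g₀.2, if_pos rfl]

lemma prod_not_filter (v : Idx n → ℕ) :
    ∏ g ∈ Finset.univ.filter (fun g : Idx n => ¬ pi0 (Gn.qn g.1) ≠ 0), v g =
      ∏ g' : Idx0 n, v g'.1 := by
  refine Finset.prod_subtype _ (fun x => ?_) (fun g => v g)
  simp [not_not]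

lemma total_eq (v : Idx n → ℕ)
    (h4 : ∏ g ∈ Finset.univ.filter (fun g : Idx n => pi0 (Gn.qn g.1) ≠ 0), v g = 3) :
    ∏ g, v g = 3 * ∏ g' : Idx0 n, v g'.1 := by
  rw [← Finset.prod_filter_mul_prod_filter_not Finset.univ
    (fun g : Idx n => pi0 (Gn.qn g.1) ≠ 0) v, h4, prod_not_filter]

/-- The main bijection. -/
noncomputable def bigEquiv (M : ℕ) :
    (IdxB n × {u : Idx0 n → ℕ // condsP Qmod u ∧ ∏ g, u g ≤ M}) ≃
    {v : Idx n → ℕ //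
      (∀ g, 0 < v g ∧ Squarefree (v g)) ∧
      (∀ g h : Idx n, g ≠ h → Nat.Coprime (v g) (v h)) ∧
      (∀ g : Idx n, pi0 (Gn.qn g.1) = 0 →
        ∀ p, p.Prime → p ∣ v g → p ≡ 1 [MOD orderOf g.1]) ∧
      (∏ g ∈ Finset.univ.filter (fun g : Idx n => pi0 (Gn.qn g.1) ≠ 0), v g) = 3 ∧
      (∏ g, v g) ≤ 3 * M} := by
  refine Equiv.ofBijective (fun x => ⟨vfun x.1 x.2.1, ?_, ?_, ?_, ?_, ?_⟩) ⟨?_, ?_⟩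
  · -- positivity and squarefreeness
    intro g
    by_cases h : pi0 (Gn.qn g.1) = 0
    · simp only [vfun]
      rw [dif_pos h]
      exact x.2.2.1.1 ⟨g, h⟩
    · rw [vfun_ne _ _ _ h]
      split_ifs
      · exact ⟨by norm_num, Nat.prime_three.squarefree⟩
      · exact ⟨one_pos, squarefree_one⟩
  · -- pairwise coprimality
    intro g h hne
    by_cases hg : pi0 (Gn.qn g.1) = 0 <;> by_cases hh : pi0 (Gn.qn h.1) = 0
    · rw [show vfun x.1 x.2.1 g = x.2.1 ⟨g, hg⟩ from vfun_idx0 x.1 x.2.1 ⟨g, hg⟩,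
        show vfun x.1 x.2.1 h = x.2.1 ⟨h, hh⟩ from vfun_idx0 x.1 x.2.1 ⟨h, hh⟩]
      exact x.2.2.1.2.1 _ _ (fun he => hne (congrArg (fun z => z.1) he))
    · rw [show vfun x.1 x.2.1 g = x.2.1 ⟨g, hg⟩ from vfun_idx0 x.1 x.2.1 ⟨g, hg⟩,
        vfun_ne _ _ _ hh]
      split_ifs
      · exact ((Nat.Prime.coprime_iff_not_dvd Nat.prime_three).mpr
          (not_three_dvd_of_conds x.2.1 x.2.2.1.2.2 ⟨g, hg⟩)).symm
      · exact Nat.coprime_one_right _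
    · rw [show vfun x.1 x.2.1 h = x.2.1 ⟨h, hh⟩ from vfun_idx0 x.1 x.2.1 ⟨h, hh⟩,
        vfun_ne _ _ _ hg]
      split_ifs
      · exact (Nat.Prime.coprime_iff_not_dvd Nat.prime_three).mpr
          (not_three_dvd_of_conds x.2.1 x.2.2.1.2.2 ⟨h, hh⟩)
      · exact Nat.coprime_one_left _
    · rw [vfun_ne _ _ _ hg, vfun_ne _ _ _ hh]
      split_ifs with e1 e2 e2
      · exact absurd (e1.trans e2.symm) hne
      · exact by decide
      · exact by decide
      · exact by decide
  · -- prime condition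
    intro g h0 p hp hpd
    rw [show vfun x.1 x.2.1 g = x.2.1 ⟨g, h0⟩ from vfun_idx0 x.1 x.2.1 ⟨g, h0⟩] at hpd
    exact x.2.2.1.2.2 ⟨g, h0⟩ p hp hpd
  · exact vfun_prodF x.1 x.2.1
  · -- total bound
    rw [total_eq _ (vfun_prodF x.1 x.2.1)]
    have h1 : ∏ g' : Idx0 n, vfun x.1 x.2.1 g'.1 = ∏ g', x.2.1 g' :=
      Finset.prod_congr rfl (fun g' _ => vfun_idx0 x.1 x.2.1 g')
    rw [h1]
    have h2 := x.2.2.2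
    omega
  · -- injectivity
    intro x y h
    have hv : vfun x.1 x.2.1 = vfun y.1 y.2.1 := congrArg Subtype.val h
    have hu : x.2.1 = y.2.1 := funext fun g' => by
      rw [← vfun_idx0 x.1 x.2.1 g', ← vfun_idx0 y.1 y.2.1 g', hv]
    have hg : x.1 = y.1 := by
      by_contra hne
      have h1 : vfun x.1 x.2.1 x.1.1 = 3 := by rw [vfun_ne _ _ _ x.1.2, if_pos rfl]
      have h2 : vfun y.1 y.2.1 x.1.1 = 1 := by
        rw [vfun_ne _ _ _ x.1.2, if_neg]
        intro he
        exact hne (Subtype.ext he)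
      rw [hv, h2] at h1
      omega
    exact Prod.ext hg (Subtype.ext hu)
  · -- surjectivity
    rintro ⟨v, h1, h2, h3, h4, h5⟩
    obtain ⟨g₀, hb, h3v, huniq⟩ := exists_three v h2 h4
    have hbound : ∏ g' : Idx0 n, v g'.1 ≤ M := by
      have ht := total_eq v h4
      rw [ht] at h5
      omega
    refine ⟨(⟨g₀, hb⟩, ⟨fun g' => v g'.1, ⟨fun g' => h1 g'.1,
      fun g' h' hne => h2 _ _ (fun he => hne (Subtype.ext he)),
      fun g' p hp hpd => h3 g'.1 g'.2 p hp hpd⟩, hbound⟩), ?_⟩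
    apply Subtype.ext
    funext g
    by_cases h : pi0 (Gn.qn g.1) = 0
    · show vfun _ _ g = v g
      simp only [vfun]
      rw [dif_pos h]
    · show vfun _ _ g = v g
      rw [vfun_ne _ _ _ h]
      by_cases he : g = g₀
      · rw [if_pos he, he, h3v]
      · rw [if_neg he, (huniq g h he)]

lemma card_U (M : ℕ) :
    Nat.card {u : Idx0 n → ℕ // condsP Qmod u ∧ ∏ g, u g ≤ M} =
      ∑ m ∈ Finset.Icc 1 M, fn n m := by
  have hpos : ∀ u : Idx0 n → ℕ, condsP Qmod u → 1 ≤ ∏ g, u g := fun u hu =>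
    Finset.prod_pos (fun i _ => (hu.1 i).1)
  rw [Nat.card_congr (prodSigmaEquiv (condsP Qmod) (fun u => ∏ g, u g) M hpos)]
  haveI : ∀ m : (Finset.Icc 1 M),
      Finite {u : Idx0 n → ℕ // condsP Qmod u ∧ ∏ g, u g = m.1} :=
    fun m => finite_factorizations Qmod m.1
  rw [Nat.card_sigma']
  rw [← Finset.sum_coe_sort (Finset.Icc 1 M) (fun m => fn n m)]
  exact Finset.sum_congr rfl (fun m _ => card_factorizations_Qmod m.1)

end Gn
/-- For every real `X ≥ 1`, the number of tuples in `𝒢_{n,bad}` with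
total product at most `X` equals `2 · 27^n · ∑_{m ≤ X/3} f_n(m)`. -/
theorem stmt_16 (n : ℕ) (hn : 1 ≤ n) (X : ℝ) (hX : 1 ≤ X) :
    badCount n X = 2 * 27 ^ n * ∑ m ∈ Finset.Icc 1 ⌊X / 3⌋₊, fn n m := by
  classical
  have hX0 : (0:ℝ) ≤ X := le_trans zero_le_one hX
  set M : ℕ := ⌊X / 3⌋₊ with hM
  have hM3 : M = ⌊X⌋₊ / 3 := by
    rw [hM, show (3:ℝ) = ((3:ℕ):ℝ) by norm_num, Nat.floor_div_natCast]
  rw [badCount]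
  have e : ∀ v : Gn.Idx n → ℕ,
      ((∀ g, 0 < v g ∧ Squarefree (v g)) ∧
       (∀ g h : Gn.Idx n, g ≠ h → Nat.Coprime (v g) (v h)) ∧
       (∀ g : Gn.Idx n, pi0 (Gn.qn g.1) = 0 →
         ∀ p, p.Prime → p ∣ v g → p ≡ 1 [MOD orderOf g.1]) ∧
       (∏ g ∈ Finset.univ.filter
          (fun g : Gn.Idx n => pi0 (Gn.qn g.1) ≠ 0), v g) = 3 ∧
       ((∏ g, v g : ℕ) : ℝ) ≤ X) ↔
      ((∀ g, 0 < v g ∧ Squarefree (v g)) ∧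
       (∀ g h : Gn.Idx n, g ≠ h → Nat.Coprime (v g) (v h)) ∧
       (∀ g : Gn.Idx n, pi0 (Gn.qn g.1) = 0 →
         ∀ p, p.Prime → p ∣ v g → p ≡ 1 [MOD orderOf g.1]) ∧
       (∏ g ∈ Finset.univ.filter
          (fun g : Gn.Idx n => pi0 (Gn.qn g.1) ≠ 0), v g) = 3 ∧
       (∏ g, v g) ≤ 3 * M) := by
    intro v
    have hdvd3 : (∏ g ∈ Finset.univ.filter
        (fun g : Gn.Idx n => pi0 (Gn.qn g.1) ≠ 0), v g) = 3 → (3:ℕ) ∣ ∏ g, v g := by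
      intro d
      have hsub := Finset.prod_dvd_prod_of_subset
        (Finset.univ.filter (fun g : Gn.Idx n => pi0 (Gn.qn g.1) ≠ 0)) Finset.univ v
        (Finset.filter_subset _ _)
      rw [d] at hsub
      exact hsub
    constructor
    · rintro ⟨a, b, c, d, hle⟩
      refine ⟨a, b, c, d, ?_⟩
      have hfl : ∏ g, v g ≤ ⌊X⌋₊ := Nat.le_floor hle
      have h3 := hdvd3 d
      omega
    · rintro ⟨a, b, c, d, hle⟩
      refine ⟨a, b, c, d, ?_⟩
      have h3 := hdvd3 d
      apply (Nat.le_floor_iff hX0).mp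
      omega
  rw [Nat.card_congr (Equiv.subtypeEquivRight e)]
  rw [Nat.card_congr (Gn.bigEquiv M).symm]
  rw [Nat.card_prod, Gn.card_IdxB, Gn.card_U]
end

section
/- For every integer n ≥ 2, the inequality (9^n − 1)/3 + (27^n − 1)/6 > (3^n − 1)/2 + (9^n − 3^n)/3 + 3^n + 3^n*(3^n − 1)/2 + 3^n*(9^n − 3^n)/18 holds (as rational numbers). In other words, the logarithmic exponent α produced in the paper's Theorem 3.4 strictly exceeds the naive Malle exponent b(G_n, ℚ) computed in Section 4, for all n ≥ 2. -/
/-- For every `n ≥ 2`, as rational numbers,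
`(3^n − 1)/2 + (9^n − 3^n)/3 + 3^n + 3^n(3^n − 1)/2 + 3^n(9^n − 3^n)/18
  < (9^n − 1)/3 + (27^n − 1)/6`:
the logarithmic exponent `α` of the paper's Theorem 3.4 strictly exceeds the naive
Malle exponent `b(G_n, ℚ)` for all `n ≥ 2`. -/
theorem stmt_18 (n : ℕ) (hn : 2 ≤ n) :
    ((3 : ℚ) ^ n - 1) / 2 + ((9 : ℚ) ^ n - 3 ^ n) / 3 + 3 ^ n
        + 3 ^ n * ((3 : ℚ) ^ n - 1) / 2 + 3 ^ n * ((9 : ℚ) ^ n - 3 ^ n) / 18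
      < ((9 : ℚ) ^ n - 1) / 3 + ((27 : ℚ) ^ n - 1) / 6 := by
  have h9 : (9 : ℚ) ^ n = ((3 : ℚ) ^ n) ^ 2 := by
    rw [← pow_mul, mul_comm, pow_mul]; norm_num
  have h27 : (27 : ℚ) ^ n = ((3 : ℚ) ^ n) ^ 3 := by
    rw [← pow_mul, mul_comm, pow_mul]; norm_num
  have hx : (9 : ℚ) ≤ (3 : ℚ) ^ n := by
    calc (9 : ℚ) = 3 ^ 2 := by norm_num
    _ ≤ 3 ^ n := by exact pow_le_pow_right₀ (by norm_num) hn
  rw [h9, h27]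
  nlinarith [sq_nonneg ((3:ℚ)^n), pow_pos (show (0:ℚ) < 3 by norm_num) n,
    mul_le_mul_of_nonneg_left hx (le_of_lt (pow_pos (show (0:ℚ) < 3 by norm_num) n))]
end
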